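/- arXiv:2509.01630 — 3 statements merged into one kernel-verified Lean document; each statement's English description precedes it below -/
import Mathlib

section
/- Let N ∈ ℕ. For 0 ≤ k < N let f_{x,k} ∈ ℝ^{n×n}, f_{u,k} ∈ ℝ^{n×m}, f_{θ,k} ∈ ℝ^{n×p}, symmetric H_{xx,k} ∈ ℝ^{n×n} and H_{uu,k} ∈ ℝ^{m×m}, and H_{xu,k} ∈ ℝ^{n×m}, H_{xθ,k} ∈ ℝ^{n×p}, H_{uθ,k} ∈ ℝ^{m×p}; let H_{xx,N} ∈ ℝ^{n×n} be symmetric and H_{xθ,N} ∈ ℝ^{n×p}. Define backward recursions: V_{xx,N} = H_{xx,N}, V_{xθ,N} = H_{xθ,N}; for k = N−1,…,0: Q_{uu,k} = H_{uu,k} + f_{u,k}ᵀ V_{xx,k+1} f_{u,k} (assumed positive definite), Q_{ux,k} = H_{xu,k}ᵀ + f_{u,k}ᵀ V_{xx,k+1} f_{x,k}, Q_{xx,k} = H_{xx,k} + f_{x,k}ᵀ V_{xx,k+1} f_{x,k}, Q_{xθ,k} = H_{xθ,k} + f_{x,k}ᵀ V_{xθ,k+1} + f_{x,k}ᵀ V_{xx,k+1}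 f_{θ,k}, Q_{uθ,k} = H_{uθ,k} + f_{u,k}ᵀ V_{xθ,k+1} + f_{u,k}ᵀ V_{xx,k+1} f_{θ,k}, K_k = −Q_{uu,k}^{-1} Q_{ux,k}, K_k^{ff} = −Q_{uu,k}^{-1} Q_{uθ,k}, V_{xx,k} = Q_{xx,k} − Q_{ux,k}ᵀ Q_{uu,k}^{-1} Q_{ux,k}, V_{xθ,k} = Q_{xθ,k} − Q_{ux,k}ᵀ Q_{uu,k}^{-1} Q_{uθ,k}. Define forward recursions: X_0 = 0, U_k = K_k X_k + K_k^{ff}, X_{k+1} = f_{x,k} X_k + f_{u,k} U_k + f_{θ,k}, and set Λ_k = V_{xx,k} X_k + V_{xθ,k} for 0 ≤ k ≤ N. Then Λ_N = H_{xx,N} X_N + H_{xθ,N}, and for every 0 ≤ k < N: (a) Λ_k = H_{xx,k} X_k + H_{xu,k} U_k + H_{xθ,k} + f_{x,k}ᵀ Λ_{k+1}, and (b) 0 = H_{xu,k}ᵀ X_k + H_{uu,k} U_k + H_{uθ,k} + f_{u,k}ᵀ Λ_{k+1}. -/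
/-!
Differentiating the DDP Riccati recursion: the feedback law `U = K X + Kᶠᶠ` makes the
matrix-valued `Q`-function stationary in the input, `Q_ux X + Q_uu U + Q_uθ = 0`, and
substituting it into the state derivative `Q_xx X + Q_uxᵀ U + Q_xθ` gives exactly
`V_xx X + V_xθ` (a Schur complement). Expanding the `Q`-matrices, with
`Λ_{k+1} = V_{xx,k+1} X_{k+1} + V_{xθ,k+1}`, turns these two identities into the PMP
conditions (b) and (a). The expansion of (a) needs `V_{xx,k+1}` symmetric, which the
recursion preserves backwards from `H_{xx,N}`.
-/

open Matrix

namespace Matrix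

variable {R : Type*} {m n : Type*} [Fintype m]

theorem isSymm_transpose_mul_mul [CommSemiring R] {A : Matrix m m R} (B : Matrix m n R)
    (hA : A.IsSymm) : (Bᵀ * A * B).IsSymm := by
  simp only [IsSymm, transpose_mul, transpose_transpose, hA.eq, Matrix.mul_assoc]

theorem IsSymm.sub_transpose_mul_inv_mul [CommRing R] [DecidableEq m] {A : Matrix n n R}
    {D : Matrix m m R} (hA : A.IsSymm) (hD : D.IsSymm) (B : Matrix m n R) :
    (A - Bᵀ * D⁻¹ * B).IsSymm :=
  hA.sub (isSymm_transpose_mul_mul B hD.inv)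

end Matrix

section RiccatiStep

variable {R : Type*} [CommRing R] {n m p : Type*} [Fintype n] [Fintype m]
  {fx : Matrix n n R} {fu : Matrix n m R} {fθ : Matrix n p R}
  {Hxx : Matrix n n R} {Hxu : Matrix n m R} {Hxθ : Matrix n p R}
  {Huu : Matrix m m R} {Huθ : Matrix m p R} {V : Matrix n n R} {W : Matrix n p R}
  {Quu : Matrix m m R} {Qux : Matrix m n R} {Qxx : Matrix n n R}
  {Qxθ : Matrix n p R} {Quθ : Matrix m p R}

theorem input_costate_eq_Q (X : Matrix n p R) (U : Matrix m p R)
    (hQuu : Quu = Huu + fuᵀ * V * fu) (hQux : Qux = Hxuᵀ + fuᵀ * V * fx)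
    (hQuθ : Quθ = Huθ + fuᵀ * W + fuᵀ * V * fθ) :
    Hxuᵀ * X + Huu * U + Huθ + fuᵀ * (V * (fx * X + fu * U + fθ) + W)
      = Qux * X + Quu * U + Quθ := by
  subst hQuu hQux hQuθ
  simp only [Matrix.add_mul, Matrix.mul_add, Matrix.mul_assoc]
  abel

theorem state_costate_eq_Q (X : Matrix n p R) (U : Matrix m p R) (hV : V.IsSymm)
    (hQux : Qux = Hxuᵀ + fuᵀ * V * fx) (hQxx : Qxx = Hxx + fxᵀ * V * fx)
    (hQxθ : Qxθ = Hxθ + fxᵀ * W + fxᵀ * V * fθ) :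
    Hxx * X + Hxu * U + Hxθ + fxᵀ * (V * (fx * X + fu * U + fθ) + W)
      = Qxx * X + Quxᵀ * U + Qxθ := by
  have hQuxT : Quxᵀ = Hxu + fxᵀ * V * fu := by
    rw [hQux, transpose_add, transpose_mul, transpose_mul, hV.eq, transpose_transpose,
      transpose_transpose, Matrix.mul_assoc]
  rw [hQuxT, hQxx, hQxθ]
  simp only [Matrix.add_mul, Matrix.mul_add, Matrix.mul_assoc]
  abel

variable [DecidableEq m]

theorem Q_input_stationary_of_feedback (hQuu : IsUnit Quu) (X : Matrix n p R) :
    Qux * X + Quu * (-(Quu⁻¹ * Qux) * X + -(Quu⁻¹ * Quθ)) + Quθ = 0 := by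
  have hinv : Quu * Quu⁻¹ = 1 := mul_nonsing_inv Quu ((isUnit_iff_isUnit_det Quu).mp hQuu)
  simp only [Matrix.mul_add, Matrix.neg_mul, Matrix.mul_neg, ← Matrix.mul_assoc, hinv,
    Matrix.one_mul]
  abel

theorem Q_state_of_feedback (X : Matrix n p R) :
    Qxx * X + Quxᵀ * (-(Quu⁻¹ * Qux) * X + -(Quu⁻¹ * Quθ)) + Qxθ
      = (Qxx - Quxᵀ * Quu⁻¹ * Qux) * X + (Qxθ - Quxᵀ * Quu⁻¹ * Quθ) := by
  simp only [Matrix.mul_add, Matrix.sub_mul, Matrix.neg_mul, Matrix.mul_neg, Matrix.mul_assoc]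
  abel

theorem riccati_step_pmp (X : Matrix n p R) {U : Matrix m p R} (hV : V.IsSymm)
    (hQuu_unit : IsUnit Quu) (hQuu : Quu = Huu + fuᵀ * V * fu)
    (hQux : Qux = Hxuᵀ + fuᵀ * V * fx) (hQxx : Qxx = Hxx + fxᵀ * V * fx)
    (hQxθ : Qxθ = Hxθ + fxᵀ * W + fxᵀ * V * fθ) (hQuθ : Quθ = Huθ + fuᵀ * W + fuᵀ * V * fθ)
    (hU : U = -(Quu⁻¹ * Qux) * X + -(Quu⁻¹ * Quθ)) :
    (Qxx - Quxᵀ * Quu⁻¹ * Qux) * X + (Qxθ - Quxᵀ * Quu⁻¹ * Quθ)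
        = Hxx * X + Hxu * U + Hxθ + fxᵀ * (V * (fx * X + fu * U + fθ) + W) ∧
      0 = Hxuᵀ * X + Huu * U + Huθ + fuᵀ * (V * (fx * X + fu * U + fθ) + W) := by
  rw [state_costate_eq_Q X U hV hQux hQxx hQxθ, input_costate_eq_Q X U hQuu hQux hQuθ, hU]
  exact ⟨(Q_state_of_feedback X).symm, (Q_input_stationary_of_feedback hQuu_unit X).symm⟩

end RiccatiStep

theorem stmt11_general {n m p : ℕ} (N : ℕ)
    (fx : ℕ → Matrix (Fin n) (Fin n) ℝ)
    (fu : ℕ → Matrix (Fin n) (Fin m) ℝ)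
    (fθ : ℕ → Matrix (Fin n) (Fin p) ℝ)
    (Hxx : ℕ → Matrix (Fin n) (Fin n) ℝ)
    (Huu : ℕ → Matrix (Fin m) (Fin m) ℝ)
    (Hxu : ℕ → Matrix (Fin n) (Fin m) ℝ)
    (Hxθ : ℕ → Matrix (Fin n) (Fin p) ℝ)
    (Huθ : ℕ → Matrix (Fin m) (Fin p) ℝ)
    (HxxN : Matrix (Fin n) (Fin n) ℝ) (hHxxN : HxxN.IsHermitian)
    (HxθN : Matrix (Fin n) (Fin p) ℝ)
    (hHxx : ∀ k < N, (Hxx k).IsHermitian)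
    -- backward Riccati recursions
    (Vxx : ℕ → Matrix (Fin n) (Fin n) ℝ)
    (Vxθ : ℕ → Matrix (Fin n) (Fin p) ℝ)
    (Quu : ℕ → Matrix (Fin m) (Fin m) ℝ)
    (Qux : ℕ → Matrix (Fin m) (Fin n) ℝ)
    (Qxx : ℕ → Matrix (Fin n) (Fin n) ℝ)
    (Qxθ : ℕ → Matrix (Fin n) (Fin p) ℝ)
    (Quθ : ℕ → Matrix (Fin m) (Fin p) ℝ)
    (K : ℕ → Matrix (Fin m) (Fin n) ℝ)
    (Kff : ℕ → Matrix (Fin m) (Fin p) ℝ)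
    (hVxxN : Vxx N = HxxN) (hVxθN : Vxθ N = HxθN)
    (hQuu : ∀ k < N, Quu k = Huu k + (fu k)ᵀ * Vxx (k + 1) * fu k)
    (hQuuPD : ∀ k < N, (Quu k).PosDef)
    (hQux : ∀ k < N, Qux k = (Hxu k)ᵀ + (fu k)ᵀ * Vxx (k + 1) * fx k)
    (hQxx : ∀ k < N, Qxx k = Hxx k + (fx k)ᵀ * Vxx (k + 1) * fx k)
    (hQxθ : ∀ k < N,
      Qxθ k = Hxθ k + (fx k)ᵀ * Vxθ (k + 1) + (fx k)ᵀ * Vxx (k + 1) * fθ k)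
    (hQuθ : ∀ k < N,
      Quθ k = Huθ k + (fu k)ᵀ * Vxθ (k + 1) + (fu k)ᵀ * Vxx (k + 1) * fθ k)
    (hK : ∀ k < N, K k = -((Quu k)⁻¹ * Qux k))
    (hKff : ∀ k < N, Kff k = -((Quu k)⁻¹ * Quθ k))
    (hVxx : ∀ k < N, Vxx k = Qxx k - (Qux k)ᵀ * (Quu k)⁻¹ * Qux k)
    (hVxθ : ∀ k < N, Vxθ k = Qxθ k - (Qux k)ᵀ * (Quu k)⁻¹ * Quθ k)
    -- forward recursions
    (X : ℕ → Matrix (Fin n) (Fin p) ℝ)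
    (U : ℕ → Matrix (Fin m) (Fin p) ℝ)
    (Λ : ℕ → Matrix (Fin n) (Fin p) ℝ)
    (hU : ∀ k < N, U k = K k * X k + Kff k)
    (hXs : ∀ k < N, X (k + 1) = fx k * X k + fu k * U k + fθ k)
    (hΛ : ∀ k ≤ N, Λ k = Vxx k * X k + Vxθ k) :
    Λ N = HxxN * X N + HxθN ∧
    ∀ k < N,
      (Λ k = Hxx k * X k + Hxu k * U k + Hxθ k + (fx k)ᵀ * Λ (k + 1)) ∧
      (0 = (Hxu k)ᵀ * X k + Huu k * U k + Huθ k + (fu k)ᵀ * Λ (k + 1)) := by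
  have hVxx_symm : ∀ k ≤ N, (Vxx k).IsSymm := fun k hk =>
    Nat.decreasingInduction (motive := fun k _ => (Vxx k).IsSymm)
      (fun k hk hV => by
        rw [hVxx k hk, hQxx k hk]
        exact ((isHermitian_iff_isSymm.mp (hHxx k hk)).add (isSymm_transpose_mul_mul _ hV))
          |>.sub_transpose_mul_inv_mul (isHermitian_iff_isSymm.mp (hQuuPD k hk).isHermitian) _)
      (by rw [hVxxN]; exact isHermitian_iff_isSymm.mp hHxxN) hk
  refine ⟨by rw [hΛ N le_rfl, hVxxN, hVxθN], fun k hk => ?_⟩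
  rw [hΛ k hk.le, hΛ (k + 1) hk, hXs k hk, hVxx k hk, hVxθ k hk]
  exact riccati_step_pmp (X k) (hVxx_symm (k + 1) hk) (hQuuPD k hk).isUnit (hQuu k hk)
    (hQux k hk) (hQxx k hk) (hQxθ k hk) (hQuθ k hk) (by rw [hU k hk, hK k hk, hKff k hk])

/-- Lemmas 1–2 of the paper combined: the trajectory generated by the backward
Riccati recursions (with gains `K_k = −Q_{uu,k}⁻¹ Q_{ux,k}`,
`K_k^ff = −Q_{uu,k}⁻¹ Q_{uθ,k}` reused from DDP) followed by the forward
closed-loop rollout `U_k = K_k X_k + K_k^ff`,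
`X_{k+1} = f_{x,k} X_k + f_{u,k} U_k + f_{θ,k}` with `X_0 = 0`, together with
the matrix-valued costate `Λ_k = V_{xx,k} X_k + V_{xθ,k}`, satisfies the
differential PMP conditions:
`Λ_N = H_{xx,N} X_N + H_{xθ,N}`, and for all `k < N`,
(a) `Λ_k = H_{xx,k} X_k + H_{xu,k} U_k + H_{xθ,k} + f_{x,k}ᵀ Λ_{k+1}` and
(b) `0 = H_{xu,k}ᵀ X_k + H_{uu,k} U_k + H_{uθ,k} + f_{u,k}ᵀ Λ_{k+1}`. -/
theorem stmt11 {n m p : ℕ} (N : ℕ)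
    (fx : ℕ → Matrix (Fin n) (Fin n) ℝ)
    (fu : ℕ → Matrix (Fin n) (Fin m) ℝ)
    (fθ : ℕ → Matrix (Fin n) (Fin p) ℝ)
    (Hxx : ℕ → Matrix (Fin n) (Fin n) ℝ)
    (Huu : ℕ → Matrix (Fin m) (Fin m) ℝ)
    (Hxu : ℕ → Matrix (Fin n) (Fin m) ℝ)
    (Hxθ : ℕ → Matrix (Fin n) (Fin p) ℝ)
    (Huθ : ℕ → Matrix (Fin m) (Fin p) ℝ)
    (HxxN : Matrix (Fin n) (Fin n) ℝ) (hHxxN : HxxN.IsHermitian)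
    (HxθN : Matrix (Fin n) (Fin p) ℝ)
    (hHxx : ∀ k < N, (Hxx k).IsHermitian)
    (hHuu : ∀ k < N, (Huu k).IsHermitian)
    -- backward Riccati recursions
    (Vxx : ℕ → Matrix (Fin n) (Fin n) ℝ)
    (Vxθ : ℕ → Matrix (Fin n) (Fin p) ℝ)
    (Quu : ℕ → Matrix (Fin m) (Fin m) ℝ)
    (Qux : ℕ → Matrix (Fin m) (Fin n) ℝ)
    (Qxx : ℕ → Matrix (Fin n) (Fin n) ℝ)
    (Qxθ : ℕ → Matrix (Fin n) (Fin p) ℝ)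
    (Quθ : ℕ → Matrix (Fin m) (Fin p) ℝ)
    (K : ℕ → Matrix (Fin m) (Fin n) ℝ)
    (Kff : ℕ → Matrix (Fin m) (Fin p) ℝ)
    (hVxxN : Vxx N = HxxN) (hVxθN : Vxθ N = HxθN)
    (hQuu : ∀ k < N, Quu k = Huu k + (fu k)ᵀ * Vxx (k + 1) * fu k)
    (hQuuPD : ∀ k < N, (Quu k).PosDef)
    (hQux : ∀ k < N, Qux k = (Hxu k)ᵀ + (fu k)ᵀ * Vxx (k + 1) * fx k)
    (hQxx : ∀ k < N, Qxx k = Hxx k + (fx k)ᵀ * Vxx (k + 1) * fx k)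
    (hQxθ : ∀ k < N,
      Qxθ k = Hxθ k + (fx k)ᵀ * Vxθ (k + 1) + (fx k)ᵀ * Vxx (k + 1) * fθ k)
    (hQuθ : ∀ k < N,
      Quθ k = Huθ k + (fu k)ᵀ * Vxθ (k + 1) + (fu k)ᵀ * Vxx (k + 1) * fθ k)
    (hK : ∀ k < N, K k = -((Quu k)⁻¹ * Qux k))
    (hKff : ∀ k < N, Kff k = -((Quu k)⁻¹ * Quθ k))
    (hVxx : ∀ k < N, Vxx k = Qxx k - (Qux k)ᵀ * (Quu k)⁻¹ * Qux k)
    (hVxθ : ∀ k < N, Vxθ k = Qxθ k - (Qux k)ᵀ * (Quu k)⁻¹ * Quθ k)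
    -- forward recursions
    (X : ℕ → Matrix (Fin n) (Fin p) ℝ)
    (U : ℕ → Matrix (Fin m) (Fin p) ℝ)
    (Λ : ℕ → Matrix (Fin n) (Fin p) ℝ)
    (hX0 : X 0 = 0)
    (hU : ∀ k < N, U k = K k * X k + Kff k)
    (hXs : ∀ k < N, X (k + 1) = fx k * X k + fu k * U k + fθ k)
    (hΛ : ∀ k ≤ N, Λ k = Vxx k * X k + Vxθ k) :
    Λ N = HxxN * X N + HxθN ∧
    ∀ k < N,
      (Λ k = Hxx k * X k + Hxu k * U k + Hxθ k + (fx k)ᵀ * Λ (k + 1)) ∧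
      (0 = (Hxu k)ᵀ * X k + Huu k * U k + Huθ k + (fu k)ᵀ * Λ (k + 1)) :=
  stmt11_general N fx fu fθ Hxx Huu Hxu Hxθ Huθ HxxN hHxxN HxθN hHxx Vxx Vxθ Quu Qux Qxx Qxθ Quθ K
    Kff hVxxN hVxθN hQuu hQuuPD hQux hQxx hQxθ hQuθ hK hKff hVxx hVxθ X U Λ hU hXs hΛ
end

section
/- Under the same data as the Riccati-LQR setup — horizon N; matrices f_{x,k} ∈ ℝ^{n×n}, f_{u,k} ∈ ℝ^{n×m}, f_{θ,k} ∈ ℝ^{n×p}, symmetric H_{xx,k}, H_{uu,k} and H_{xu,k}, H_{xθ,k}, H_{uθ,k} for 0 ≤ k < N, symmetric terminal H_{xx,N} and H_{xθ,N}; backward recursions V_{xx,N} = H_{xx,N}, V_{xθ,N} = H_{xθ,N}, Q_{uu,k} = H_{uu,k} + f_{u,k}ᵀ V_{xx,k+1} f_{u,k} (assumed positive definite for all k), Q_{ux,k} = H_{xu,k}ᵀ + f_{u,k}ᵀ V_{xx,k+1} f_{x,k}, Q_{xx,k} = H_{xx,k} + f_{x,k}ᵀ V_{xx,k+1} f_{x,k},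 Q_{xθ,k} = H_{xθ,k} + f_{x,k}ᵀ V_{xθ,k+1} + f_{x,k}ᵀ V_{xx,k+1} f_{θ,k}, Q_{uθ,k} = H_{uθ,k} + f_{u,k}ᵀ V_{xθ,k+1} + f_{u,k}ᵀ V_{xx,k+1} f_{θ,k}, K_k = −Q_{uu,k}^{-1} Q_{ux,k}, K_k^{ff} = −Q_{uu,k}^{-1} Q_{uθ,k}, V_{xx,k} = Q_{xx,k} − Q_{ux,k}ᵀ Q_{uu,k}^{-1} Q_{ux,k}, V_{xθ,k} = Q_{xθ,k} − Q_{ux,k}ᵀ Q_{uu,k}^{-1} Q_{uθ,k} — define the total cost J̄(X,U) = Σ_{k=0}^{N−1} tr( (1/2)X_kᵀ H_{xx,k} X_k + X_kᵀ H_{xu,k} U_k + (1/2)U_kᵀ H_{uu,k} U_k + H_{xθ,k}ᵀ X_k + H_{uθ,k}ᵀ U_k ) + tr( (1/2)X_Nᵀ H_{xx,N} X_N + H_{xθ,N}ᵀ X_N ). Then there exists a constant c ∈ ℝ, depending only on the problem data, such that for every pair of sequences (X_k)_{k=0}^{N}, (U_k)_{k=0}^{N−1} with X_0 = 0 and X_{k+1}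 = f_{x,k} X_k + f_{u,k} U_k + f_{θ,k}: J̄(X,U) = c + Σ_{k=0}^{N−1} (1/2)·tr( (U_k − K_k X_k − K_k^{ff})ᵀ Q_{uu,k} (U_k − K_k X_k − K_k^{ff}) ). Consequently the trajectory generated by the forward recursion U_k = K_k X_k + K_k^{ff} is the unique global minimizer of J̄ over all sequences satisfying the dynamics with X_0 = 0. -/
open Matrix Finset

lemma trflip {a b c : Type*} [Fintype a][Fintype b][Fintype c]
 (Y : Matrix b a ℝ) (M : Matrix b c ℝ) (Z : Matrix c a ℝ) :
 trace (Yᵀ * M * Z) = trace (Zᵀ * Mᵀ * Y) := by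
 rw [← trace_transpose]; simp [Matrix.transpose_mul, Matrix.mul_assoc]

lemma trflip2 {a b : Type*} [Fintype a][Fintype b] (M N : Matrix a b ℝ) :
  trace (Mᵀ * N) = trace (Nᵀ * M) := by
  rw [← trace_transpose]; simp [Matrix.transpose_mul]

lemma sq_lem {n m p : ℕ} (Q G : Matrix (Fin m) (Fin m) ℝ)
    (R : Matrix (Fin m) (Fin n) ℝ) (T : Matrix (Fin m) (Fin p) ℝ)
    (X : Matrix (Fin n) (Fin p) ℝ) (U : Matrix (Fin m) (Fin p) ℝ)
    (hQs : Qᵀ = Q) (hG : Gᵀ = G) (hGQ : G * Q = 1) (hQG : Q * G = 1) :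
    trace ((U + G*R*X + G*T)ᵀ * Q * (U + G*R*X + G*T))
      = trace (Uᵀ*Q*U) + 2*trace (Uᵀ*(R*X)) + 2*trace (Tᵀ*U)
        + trace (Xᵀ*Rᵀ*G*R*X) + 2*trace (Tᵀ*G*(R*X)) + trace (Tᵀ*G*T) := by
  have e1 : ∀ (M : Matrix (Fin m) (Fin p) ℝ), Q * (G * M) = M := by
    intro M; rw [← Matrix.mul_assoc, hQG, Matrix.one_mul]
  have e2 : ∀ (M : Matrix (Fin m) (Fin p) ℝ), G * (Q * M) = M := by
    intro M; rw [← Matrix.mul_assoc, hGQ, Matrix.one_mul]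
  simp only [Matrix.add_mul, Matrix.mul_add, Matrix.transpose_add, Matrix.transpose_mul,
    Matrix.transpose_transpose, hQs, hG, Matrix.mul_assoc, e1, e2, trace_add]
  have f1 := trflip2 U (R*X); have f2 := trflip2 U T
  have f3 := trflip2 (G*T) (R*X)
  have f4 : trace (Xᵀ * (Rᵀ * (G * T))) = trace (Tᵀ * (G * (R * X))) := by
    rw [← trace_transpose]; simp [Matrix.transpose_mul, hG, Matrix.mul_assoc]
  have f5 : trace (Tᵀ*G*(R*X)) = trace (Tᵀ*(G*(R*X))) := by rw [Matrix.mul_assoc]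
  have f6 : trace (Uᵀ*Q*U) = trace (Uᵀ*(Q*U)) := by rw [Matrix.mul_assoc]
  have f7 : trace (Xᵀ*Rᵀ*G*R*X) = trace (Xᵀ*(Rᵀ*(G*(R*X)))) := by simp [Matrix.mul_assoc]
  have f8 : trace (Tᵀ*G*T) = trace (Tᵀ*(G*T)) := by rw [Matrix.mul_assoc]
  simp only [f5, f6, f7, f8] at *
  have f9 : trace (Xᵀ * (Rᵀ * U)) = trace (Uᵀ * (R * X)) := by
    rw [← trace_transpose]; simp [Matrix.transpose_mul, Matrix.mul_assoc]
  linarith [f1, f2, f3, f4, f9]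

lemma step_id {n m p : ℕ}
    (A Hxx P : Matrix (Fin n) (Fin n) ℝ) (B : Matrix (Fin n) (Fin m) ℝ)
    (C Hxθ W : Matrix (Fin n) (Fin p) ℝ)
    (Huu Q G : Matrix (Fin m) (Fin m) ℝ)
    (Hxu : Matrix (Fin n) (Fin m) ℝ) (Huθ T : Matrix (Fin m) (Fin p) ℝ)
    (Rm : Matrix (Fin m) (Fin n) ℝ)
    (Vk : Matrix (Fin n) (Fin n) ℝ) (Vθ : Matrix (Fin n) (Fin p) ℝ)
    (hHxx : Hxxᵀ = Hxx) (hHuu : Huuᵀ = Huu) (hP : Pᵀ = P)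
    (hQ : Q = Huu + Bᵀ * P * B) (hG : Gᵀ = G) (hGQ : G * Q = 1) (hQG : Q * G = 1)
    (hR : Rm = Hxuᵀ + Bᵀ * P * A) (hT : T = Huθ + Bᵀ * W + Bᵀ * P * C)
    (hVk : Vk = (Hxx + Aᵀ * P * A) - Rmᵀ * G * Rm)
    (hVθ : Vθ = (Hxθ + Aᵀ * W + Aᵀ * P * C) - Rmᵀ * G * T)
    (X : Matrix (Fin n) (Fin p) ℝ) (U : Matrix (Fin m) (Fin p) ℝ) :
    trace ((1/2:ℝ) • (Xᵀ*Hxx*X) + Xᵀ*Hxu*U + (1/2:ℝ) • (Uᵀ*Huu*U) + Hxθᵀ*X + Huθᵀ*U)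
      + trace ((1/2:ℝ) • ((A*X+B*U+C)ᵀ * P * (A*X+B*U+C)) + Wᵀ*(A*X+B*U+C))
    = trace ((1/2:ℝ) • (Xᵀ*Vk*X) + Vθᵀ*X)
      + (1/2)*trace ((U + G*Rm*X + G*T)ᵀ * Q * (U + G*Rm*X + G*T))
      + ((1/2)*trace (Cᵀ*P*C) + trace (Wᵀ*C) - (1/2)*trace (Tᵀ*G*T)) := by
  have hQs : Qᵀ = Q := by rw [hQ]; simp [Matrix.transpose_add, Matrix.transpose_mul, hHuu, hP,
    Matrix.mul_assoc]
  rw [sq_lem Q G Rm T X U hQs hG hGQ hQG]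
  subst hQ hR hT hVk hVθ
  simp only [Matrix.add_mul, Matrix.mul_add, Matrix.sub_mul, Matrix.mul_sub,
    Matrix.transpose_add, Matrix.transpose_sub, Matrix.transpose_mul,
    Matrix.transpose_transpose, hP, hG, hHxx, hHuu, Matrix.mul_assoc,
    trace_add, trace_sub, trace_smul, smul_eq_mul]
  have g1 : trace (Xᵀ * (Hxu * U)) = trace (Uᵀ * (Hxuᵀ * X)) := by
    rw [← trace_transpose]; simp [Matrix.transpose_mul, Matrix.mul_assoc]
  have g2 : trace (Xᵀ * (Aᵀ * (P * (B * U)))) = trace (Uᵀ * (Bᵀ * (P * (A * X)))) := by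
    rw [← trace_transpose]; simp [Matrix.transpose_mul, hP, Matrix.mul_assoc]
  have g3 : trace (Xᵀ * (Aᵀ * (P * C))) = trace (Cᵀ * (P * (A * X))) := by
    rw [← trace_transpose]; simp [Matrix.transpose_mul, hP, Matrix.mul_assoc]
  have g4 : trace (Uᵀ * (Bᵀ * (P * C))) = trace (Cᵀ * (P * (B * U))) := by
    rw [← trace_transpose]; simp [Matrix.transpose_mul, hP, Matrix.mul_assoc]
  ring_nf
  linarith [g1, g2, g3, g4]


lemma pd_trace {m p : ℕ} (Q : Matrix (Fin m) (Fin m) ℝ) (hQ : Q.PosDef)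
    (Δ : Matrix (Fin m) (Fin p) ℝ) :
    0 ≤ trace (Δᵀ * Q * Δ) ∧ (trace (Δᵀ * Q * Δ) = 0 → Δ = 0) := by
  have key : trace (Δᵀ * Q * Δ)
      = ∑ j : Fin p, (fun a => Δ a j) ⬝ᵥ Q *ᵥ (fun a => Δ a j) := by
    simp only [Matrix.trace, Matrix.diag, Matrix.mul_apply, dotProduct, Matrix.mulVec,
      Matrix.transpose_apply, Finset.sum_mul, Finset.mul_sum]
    refine Finset.sum_congr rfl fun j _ => ?_
    rw [Finset.sum_comm]
    exact Finset.sum_congr rfl fun a _ => Finset.sum_congr rfl fun b _ => by ring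
  have nonneg : ∀ j : Fin p, 0 ≤ (fun a => Δ a j) ⬝ᵥ Q *ᵥ (fun a => Δ a j) := by
    intro j
    have := hQ.posSemidef.dotProduct_mulVec_nonneg (fun a => Δ a j)
    simpa using this
  constructor
  · rw [key]; exact Finset.sum_nonneg fun j _ => nonneg j
  · intro h0
    rw [key] at h0
    have hall := (Finset.sum_eq_zero_iff_of_nonneg (fun j _ => nonneg j)).1 h0
    ext a j
    by_contra hne
    have hcol : (fun a => Δ a j) ≠ 0 := by
      intro hc; exact hne (by simpa using congrFun hc a)
    have hpos := hQ.dotProduct_mulVec_pos (x := fun a => Δ a j) hcol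
    have : (0:ℝ) < (fun a => Δ a j) ⬝ᵥ Q *ᵥ (fun a => Δ a j) := by simpa using hpos
    have := hall j (Finset.mem_univ j)
    simp at hne
    linarith


/-- Global optimality of the Riccati/closed-loop solution of the matrix-valued
finite-horizon LQR (the paper's Lemma 1, eq. (40), combined with Lemma 2):
with the backward Riccati data (each `Q_{uu,k}` positive definite), there is a
constant `c`, depending only on the problem data, such that every sequence
satisfying the dynamics with `X_0 = 0` has total cost
`J̄(X,U) = c + ∑_k (1/2) tr((U_k − K_k X_k − K_k^ff)ᵀ Q_{uu,k} (U_k − K_k X_k − K_k^ff))`;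
consequently the closed-loop trajectory `U_k = K_k X_k + K_k^ff` is the unique
global minimizer of `J̄` over all dynamically feasible sequences. -/
theorem stmt12 {n m p : ℕ} (N : ℕ)
    (fx : ℕ → Matrix (Fin n) (Fin n) ℝ)
    (fu : ℕ → Matrix (Fin n) (Fin m) ℝ)
    (fθ : ℕ → Matrix (Fin n) (Fin p) ℝ)
    (Hxx : ℕ → Matrix (Fin n) (Fin n) ℝ)
    (Huu : ℕ → Matrix (Fin m) (Fin m) ℝ)
    (Hxu : ℕ → Matrix (Fin n) (Fin m) ℝ)
    (Hxθ : ℕ → Matrix (Fin n) (Fin p) ℝ)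
    (Huθ : ℕ → Matrix (Fin m) (Fin p) ℝ)
    (HxxN : Matrix (Fin n) (Fin n) ℝ) (hHxxN : HxxN.IsHermitian)
    (HxθN : Matrix (Fin n) (Fin p) ℝ)
    (hHxx : ∀ k < N, (Hxx k).IsHermitian)
    (hHuu : ∀ k < N, (Huu k).IsHermitian)
    -- backward Riccati recursions
    (Vxx : ℕ → Matrix (Fin n) (Fin n) ℝ)
    (Vxθ : ℕ → Matrix (Fin n) (Fin p) ℝ)
    (Quu : ℕ → Matrix (Fin m) (Fin m) ℝ)
    (Qux : ℕ → Matrix (Fin m) (Fin n) ℝ)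
    (Qxx : ℕ → Matrix (Fin n) (Fin n) ℝ)
    (Qxθ : ℕ → Matrix (Fin n) (Fin p) ℝ)
    (Quθ : ℕ → Matrix (Fin m) (Fin p) ℝ)
    (K : ℕ → Matrix (Fin m) (Fin n) ℝ)
    (Kff : ℕ → Matrix (Fin m) (Fin p) ℝ)
    (hVxxN : Vxx N = HxxN) (hVxθN : Vxθ N = HxθN)
    (hQuu : ∀ k < N, Quu k = Huu k + (fu k)ᵀ * Vxx (k + 1) * fu k)
    (hQuuPD : ∀ k < N, (Quu k).PosDef)
    (hQux : ∀ k < N, Qux k = (Hxu k)ᵀ + (fu k)ᵀ * Vxx (k + 1) * fx k)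
    (hQxx : ∀ k < N, Qxx k = Hxx k + (fx k)ᵀ * Vxx (k + 1) * fx k)
    (hQxθ : ∀ k < N,
      Qxθ k = Hxθ k + (fx k)ᵀ * Vxθ (k + 1) + (fx k)ᵀ * Vxx (k + 1) * fθ k)
    (hQuθ : ∀ k < N,
      Quθ k = Huθ k + (fu k)ᵀ * Vxθ (k + 1) + (fu k)ᵀ * Vxx (k + 1) * fθ k)
    (hK : ∀ k < N, K k = -((Quu k)⁻¹ * Qux k))
    (hKff : ∀ k < N, Kff k = -((Quu k)⁻¹ * Quθ k))
    (hVxx : ∀ k < N, Vxx k = Qxx k - (Qux k)ᵀ * (Quu k)⁻¹ * Qux k)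
    (hVxθ : ∀ k < N, Vxθ k = Qxθ k - (Qux k)ᵀ * (Quu k)⁻¹ * Quθ k)
    -- the closed-loop trajectory generated by the forward recursion
    (Xcl : ℕ → Matrix (Fin n) (Fin p) ℝ)
    (Ucl : ℕ → Matrix (Fin m) (Fin p) ℝ)
    (hXcl0 : Xcl 0 = 0)
    (hUcl : ∀ k < N, Ucl k = K k * Xcl k + Kff k)
    (hXcl : ∀ k < N, Xcl (k + 1) = fx k * Xcl k + fu k * Ucl k + fθ k) :
    let Jbar : (ℕ → Matrix (Fin n) (Fin p) ℝ) →
        (ℕ → Matrix (Fin m) (Fin p) ℝ) → ℝ := fun X U =>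
      (∑ k ∈ Finset.range N,
        Matrix.trace ((1 / 2 : ℝ) • ((X k)ᵀ * Hxx k * X k) +
          (X k)ᵀ * Hxu k * U k + (1 / 2 : ℝ) • ((U k)ᵀ * Huu k * U k) +
          (Hxθ k)ᵀ * X k + (Huθ k)ᵀ * U k)) +
        Matrix.trace ((1 / 2 : ℝ) • ((X N)ᵀ * HxxN * X N) + HxθNᵀ * X N)
    ∃ c : ℝ,
      (∀ (X : ℕ → Matrix (Fin n) (Fin p) ℝ)
         (U : ℕ → Matrix (Fin m) (Fin p) ℝ),
        X 0 = 0 →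
        (∀ k < N, X (k + 1) = fx k * X k + fu k * U k + fθ k) →
        Jbar X U = c + ∑ k ∈ Finset.range N,
          (1 / 2 : ℝ) * Matrix.trace ((U k - K k * X k - Kff k)ᵀ * Quu k *
            (U k - K k * X k - Kff k))) ∧
      (∀ (X : ℕ → Matrix (Fin n) (Fin p) ℝ)
         (U : ℕ → Matrix (Fin m) (Fin p) ℝ),
        X 0 = 0 →
        (∀ k < N, X (k + 1) = fx k * X k + fu k * U k + fθ k) →
        Jbar Xcl Ucl ≤ Jbar X U ∧
          (Jbar X U = Jbar Xcl Ucl →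
            (∀ k < N, U k = Ucl k) ∧ (∀ k ≤ N, X k = Xcl k))) := by
  intro Jbar
  have hdet : ∀ k, k < N → IsUnit (Quu k).det := fun k hk =>
    isUnit_iff_ne_zero.2 (hQuuPD k hk).det_pos.ne'
  have hQGk : ∀ k, k < N → Quu k * (Quu k)⁻¹ = 1 := fun k hk =>
    Matrix.mul_nonsing_inv _ (hdet k hk)
  have hGQk : ∀ k, k < N → (Quu k)⁻¹ * Quu k = 1 := fun k hk =>
    Matrix.nonsing_inv_mul _ (hdet k hk)
  have hVsymAux : ∀ d k, k + d = N → (Vxx k)ᵀ = Vxx k := by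
    intro d
    induction d with
    | zero =>
      intro k hk
      have hkN : k = N := by omega
      subst hkN; rw [hVxxN]; exact hHxxN
    | succ d ih =>
      intro k hk
      have hkN : k < N := by omega
      have hnext : (Vxx (k+1))ᵀ = Vxx (k+1) := ih (k+1) (by omega)
      have hHuuk : (Huu k)ᵀ = Huu k := hHuu k hkN
      have hHxxk : (Hxx k)ᵀ = Hxx k := hHxx k hkN
      have hQsymk : (Quu k)ᵀ = Quu k := by
        rw [hQuu k hkN]
        simp [Matrix.transpose_add, Matrix.transpose_mul, hHuuk, hnext, Matrix.mul_assoc]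
      have hGsymk : ((Quu k)⁻¹)ᵀ = (Quu k)⁻¹ := by
        rw [Matrix.transpose_nonsing_inv, hQsymk]
      rw [hVxx k hkN, hQxx k hkN]
      simp [Matrix.transpose_sub, Matrix.transpose_add, Matrix.transpose_mul,
        Matrix.transpose_transpose, hHxxk, hnext, hGsymk, Matrix.mul_assoc]
  have hVsym : ∀ k, k ≤ N → (Vxx k)ᵀ = Vxx k := fun k hk => hVsymAux (N - k) k (by omega)
  have hGsym : ∀ k, k < N → ((Quu k)⁻¹)ᵀ = (Quu k)⁻¹ := by
    intro k hk
    have hHuuk : (Huu k)ᵀ = Huu k := hHuu k hk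
    have hQsymk : (Quu k)ᵀ = Quu k := by
      rw [hQuu k hk]
      simp [Matrix.transpose_add, Matrix.transpose_mul, hHuuk,
        hVsym (k+1) (by omega), Matrix.mul_assoc]
    rw [Matrix.transpose_nonsing_inv, hQsymk]
  set c : ℝ := ∑ k ∈ Finset.range N,
    ((1/2)*trace ((fθ k)ᵀ * Vxx (k+1) * fθ k) + trace ((Vxθ (k+1))ᵀ * fθ k)
      - (1/2)*trace ((Quθ k)ᵀ * (Quu k)⁻¹ * Quθ k)) with hc
  have key : ∀ (X : ℕ → Matrix (Fin n) (Fin p) ℝ) (U : ℕ → Matrix (Fin m) (Fin p) ℝ),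
      X 0 = 0 → (∀ k < N, X (k + 1) = fx k * X k + fu k * U k + fθ k) →
      Jbar X U = c + ∑ k ∈ Finset.range N,
        (1 / 2 : ℝ) * Matrix.trace ((U k - K k * X k - Kff k)ᵀ * Quu k *
          (U k - K k * X k - Kff k)) := by
    intro X U hX0 hdyn
    have e0 : Jbar X U = (∑ k ∈ Finset.range N,
        Matrix.trace ((1 / 2 : ℝ) • ((X k)ᵀ * Hxx k * X k) +
          (X k)ᵀ * Hxu k * U k + (1 / 2 : ℝ) • ((U k)ᵀ * Huu k * U k) +
          (Hxθ k)ᵀ * X k + (Huθ k)ᵀ * U k)) +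
        Matrix.trace ((1 / 2 : ℝ) • ((X N)ᵀ * HxxN * X N) + HxθNᵀ * X N) := rfl
    have tele : (∑ k ∈ Finset.range N,
        (trace ((1/2:ℝ) • ((X (k+1))ᵀ * Vxx (k+1) * X (k+1)) + (Vxθ (k+1))ᵀ * X (k+1))
          - trace ((1/2:ℝ) • ((X k)ᵀ * Vxx k * X k) + (Vxθ k)ᵀ * X k)))
        = trace ((1/2:ℝ) • ((X N)ᵀ * Vxx N * X N) + (Vxθ N)ᵀ * X N)
          - trace ((1/2:ℝ) • ((X 0)ᵀ * Vxx 0 * X 0) + (Vxθ 0)ᵀ * X 0) :=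
      Finset.sum_range_sub
        (fun k => trace ((1/2:ℝ) • ((X k)ᵀ * Vxx k * X k) + (Vxθ k)ᵀ * X k)) N
    have h00 : trace ((1/2:ℝ) • ((X 0)ᵀ * Vxx 0 * X 0) + (Vxθ 0)ᵀ * X 0) = 0 := by
      rw [hX0]; simp
    have hVN : trace ((1/2:ℝ) • ((X N)ᵀ * Vxx N * X N) + (Vxθ N)ᵀ * X N)
        = ∑ k ∈ Finset.range N,
            (trace ((1/2:ℝ) • ((X (k+1))ᵀ * Vxx (k+1) * X (k+1)) + (Vxθ (k+1))ᵀ * X (k+1))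
              - trace ((1/2:ℝ) • ((X k)ᵀ * Vxx k * X k) + (Vxθ k)ᵀ * X k)) := by
      rw [tele, h00]; ring
    have hstep : ∀ k ∈ Finset.range N,
        Matrix.trace ((1 / 2 : ℝ) • ((X k)ᵀ * Hxx k * X k) +
          (X k)ᵀ * Hxu k * U k + (1 / 2 : ℝ) • ((U k)ᵀ * Huu k * U k) +
          (Hxθ k)ᵀ * X k + (Huθ k)ᵀ * U k) +
        (trace ((1/2:ℝ) • ((X (k+1))ᵀ * Vxx (k+1) * X (k+1)) + (Vxθ (k+1))ᵀ * X (k+1))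
          - trace ((1/2:ℝ) • ((X k)ᵀ * Vxx k * X k) + (Vxθ k)ᵀ * X k))
        = ((1/2)*trace ((fθ k)ᵀ * Vxx (k+1) * fθ k) + trace ((Vxθ (k+1))ᵀ * fθ k)
            - (1/2)*trace ((Quθ k)ᵀ * (Quu k)⁻¹ * Quθ k))
          + (1 / 2 : ℝ) * Matrix.trace ((U k - K k * X k - Kff k)ᵀ * Quu k *
              (U k - K k * X k - Kff k)) := by
      intro k hk
      have hkN := Finset.mem_range.1 hk
      have hdel : U k - K k * X k - Kff k
          = U k + (Quu k)⁻¹ * Qux k * X k + (Quu k)⁻¹ * Quθ k := by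
        rw [hK k hkN, hKff k hkN, Matrix.neg_mul, sub_neg_eq_add, sub_neg_eq_add]
      have hVkk : Vxx k = (Hxx k + (fx k)ᵀ * Vxx (k+1) * fx k)
          - (Qux k)ᵀ * (Quu k)⁻¹ * Qux k := by rw [hVxx k hkN, hQxx k hkN]
      have hVθk : Vxθ k = (Hxθ k + (fx k)ᵀ * Vxθ (k+1) + (fx k)ᵀ * Vxx (k+1) * fθ k)
          - (Qux k)ᵀ * (Quu k)⁻¹ * Quθ k := by rw [hVxθ k hkN, hQxθ k hkN]
      have hmain := step_id (fx k) (Hxx k) (Vxx (k+1)) (fu k) (fθ k) (Hxθ k) (Vxθ (k+1))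
        (Huu k) (Quu k) ((Quu k)⁻¹) (Hxu k) (Huθ k) (Quθ k) (Qux k) (Vxx k) (Vxθ k)
        (hHxx k hkN) (hHuu k hkN) (hVsym (k+1) (by omega)) (hQuu k hkN)
        (hGsym k hkN) (hGQk k hkN) (hQGk k hkN) (hQux k hkN) (hQuθ k hkN)
        hVkk hVθk (X k) (U k)
      rw [hdyn k hkN, hdel]
      linarith [hmain]
    rw [e0, ← hVxxN, ← hVxθN, hVN, ← Finset.sum_add_distrib,
      Finset.sum_congr rfl hstep, Finset.sum_add_distrib, hc]
  refine ⟨c, key, ?_⟩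
  intro X U hX0 hdyn
  have hXUkey := key X U hX0 hdyn
  have hclkey := key Xcl Ucl hXcl0 hXcl
  have hclJ : Jbar Xcl Ucl = c := by
    rw [hclkey]
    have hz : ∀ k ∈ Finset.range N,
        (1 / 2 : ℝ) * Matrix.trace ((Ucl k - K k * Xcl k - Kff k)ᵀ * Quu k *
          (Ucl k - K k * Xcl k - Kff k)) = 0 := by
      intro k hk
      have hkN := Finset.mem_range.1 hk
      have h0 : Ucl k - K k * Xcl k - Kff k = 0 := by rw [hUcl k hkN]; abel
      rw [h0]; simp
    rw [Finset.sum_eq_zero hz, add_zero]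
  have hnn : ∀ k ∈ Finset.range N, (0:ℝ) ≤
      (1 / 2 : ℝ) * Matrix.trace ((U k - K k * X k - Kff k)ᵀ * Quu k *
        (U k - K k * X k - Kff k)) := by
    intro k hk
    have hkN := Finset.mem_range.1 hk
    exact mul_nonneg (by norm_num)
      (pd_trace (Quu k) (hQuuPD k hkN) (U k - K k * X k - Kff k)).1
  constructor
  · rw [hXUkey, hclJ]
    exact le_add_of_nonneg_right (Finset.sum_nonneg hnn)
  · intro heq
    have hS : (∑ k ∈ Finset.range N,
        (1 / 2 : ℝ) * Matrix.trace ((U k - K k * X k - Kff k)ᵀ * Quu k *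
          (U k - K k * X k - Kff k))) = 0 := by
      rw [hXUkey, hclJ] at heq; linarith
    have hall := (Finset.sum_eq_zero_iff_of_nonneg hnn).1 hS
    have hU' : ∀ k, k < N → U k = K k * X k + Kff k := by
      intro k hkN
      have h1 := hall k (Finset.mem_range.2 hkN)
      have h2 : Matrix.trace ((U k - K k * X k - Kff k)ᵀ * Quu k *
          (U k - K k * X k - Kff k)) = 0 := by linarith
      have h3 := (pd_trace (Quu k) (hQuuPD k hkN) (U k - K k * X k - Kff k)).2 h2
      rw [sub_sub] at h3
      exact sub_eq_zero.mp h3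
    have hXeq : ∀ k, k ≤ N → X k = Xcl k := by
      intro k
      induction k with
      | zero => intro _; rw [hX0, hXcl0]
      | succ k ih =>
        intro hk
        have hkN : k < N := by omega
        rw [hdyn k hkN, hXcl k hkN, hU' k hkN, ih (by omega), hUcl k hkN]
    exact ⟨fun k hk => by rw [hU' k hk, hXeq k (le_of_lt hk), ← hUcl k hk],
      fun k hk => hXeq k hk⟩
end

section
/- Let V'_{xx} ∈ ℝ^{n×n}, V'_{xθ} ∈ ℝ^{n×p}, f_x ∈ ℝ^{n×n}, f_u ∈ ℝ^{n×m}, f_θ ∈ ℝ^{n×p}, H_{xx} ∈ ℝ^{n×n}, H_{xu} ∈ ℝ^{n×m}, H_{ux} ∈ ℝ^{m×n}, H_{uu} ∈ ℝ^{m×m}, H_{xθ} ∈ ℝ^{n×p}, H_{uθ} ∈ ℝ^{m×p}, and dX ∈ ℝ^{n×p}, dU ∈ ℝ^{m×p}. Define dX₊ = f_x dX + f_u dU + f_θ and dΛ₊ = V'_{xx} dX₊ + V'_{xθ}. Define Q_{xx} = H_{xx} + f_xᵀ V'_{xx} f_x, Q_{xu} = H_{xu} + f_xᵀ V'_{xx}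 f_u, Q_{xθ} = H_{xθ} + f_xᵀ V'_{xθ} + f_xᵀ V'_{xx} f_θ, Q_{ux} = H_{ux} + f_uᵀ V'_{xx} f_x, Q_{uu} = H_{uu} + f_uᵀ V'_{xx} f_u, Q_{uθ} = H_{uθ} + f_uᵀ V'_{xθ} + f_uᵀ V'_{xx} f_θ. Then: (a) Q_{xx} dX + Q_{xu} dU + Q_{xθ} = H_{xx} dX + H_{xu} dU + H_{xθ} + f_xᵀ dΛ₊, and (b) Q_{ux} dX + Q_{uu} dU + Q_{uθ} = H_{ux} dX + H_{uu} dU + H_{uθ} + f_uᵀ dΛ₊. -/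
open Matrix

/-! Both identities are one identity with `fᵀ` standing for `f_xᵀ` or `f_uᵀ`: distributing
`fᵀ dΛ₊ = fᵀ V'_{xx} (f_x dX + f_u dU + f_θ) + fᵀ V'_{xθ}` produces exactly the terms that the
`Q`-Hessians add to the `H`-Hessians. -/

theorem Matrix.hessian_fold_mul_add_eq_add_mul_costate {α : Type*} [NonUnitalSemiring α]
    {k l n r : Type*} [Fintype l] [Fintype n] [Fintype r]
    (A : Matrix k n α) (Vxx : Matrix n n α) (Vxθ : Matrix n r α)
    (fx : Matrix n n α) (fu : Matrix n l α) (fθ : Matrix n r α)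
    (Hx : Matrix k n α) (Hu : Matrix k l α) (Hθ : Matrix k r α)
    (dX : Matrix n r α) (dU : Matrix l r α) :
    (Hx + A * Vxx * fx) * dX + (Hu + A * Vxx * fu) * dU + (Hθ + A * Vxθ + A * Vxx * fθ) =
      Hx * dX + Hu * dU + Hθ + A * (Vxx * (fx * dX + fu * dU + fθ) + Vxθ) := by
  simp only [Matrix.mul_add, Matrix.add_mul, Matrix.mul_assoc]
  abel

/-- Stage-wise identity of the paper's Lemma 1 (Appendix A): the differential
Bellman-principle conditions written with the cost-to-go Hessians
`Q_{··}` (which fold the next-step value-function derivatives `V'_{xx}`,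
`V'_{xθ}` into the stage data) coincide with the differential PMP conditions
written with the Hamiltonian Hessians `H_{··}` and the differentiated costate
`dΛ₊ = V'_{xx} dX₊ + V'_{xθ}`, where `dX₊ = f_x dX + f_u dU + f_θ`. -/
theorem stmt14 {n m p : ℕ}
    (V'xx : Matrix (Fin n) (Fin n) ℝ)
    (V'xθ : Matrix (Fin n) (Fin p) ℝ)
    (fx : Matrix (Fin n) (Fin n) ℝ)
    (fu : Matrix (Fin n) (Fin m) ℝ)
    (fθ : Matrix (Fin n) (Fin p) ℝ)
    (Hxx : Matrix (Fin n) (Fin n) ℝ)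
    (Hxu : Matrix (Fin n) (Fin m) ℝ)
    (Hux : Matrix (Fin m) (Fin n) ℝ)
    (Huu : Matrix (Fin m) (Fin m) ℝ)
    (Hxθ : Matrix (Fin n) (Fin p) ℝ)
    (Huθ : Matrix (Fin m) (Fin p) ℝ)
    (dX : Matrix (Fin n) (Fin p) ℝ)
    (dU : Matrix (Fin m) (Fin p) ℝ) :
    let dXp : Matrix (Fin n) (Fin p) ℝ := fx * dX + fu * dU + fθ
    let dΛp : Matrix (Fin n) (Fin p) ℝ := V'xx * dXp + V'xθ
    let Qxx : Matrix (Fin n) (Fin n) ℝ := Hxx + fxᵀ * V'xx * fx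
    let Qxu : Matrix (Fin n) (Fin m) ℝ := Hxu + fxᵀ * V'xx * fu
    let Qxθ : Matrix (Fin n) (Fin p) ℝ := Hxθ + fxᵀ * V'xθ + fxᵀ * V'xx * fθ
    let Qux : Matrix (Fin m) (Fin n) ℝ := Hux + fuᵀ * V'xx * fx
    let Quu : Matrix (Fin m) (Fin m) ℝ := Huu + fuᵀ * V'xx * fu
    let Quθ : Matrix (Fin m) (Fin p) ℝ := Huθ + fuᵀ * V'xθ + fuᵀ * V'xx * fθ
    (Qxx * dX + Qxu * dU + Qxθ = Hxx * dX + Hxu * dU + Hxθ + fxᵀ * dΛp) ∧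
    (Qux * dX + Quu * dU + Quθ = Hux * dX + Huu * dU + Huθ + fuᵀ * dΛp) :=
  ⟨hessian_fold_mul_add_eq_add_mul_costate fxᵀ V'xx V'xθ fx fu fθ Hxx Hxu Hxθ dX dU,
    hessian_fold_mul_add_eq_add_mul_costate fuᵀ V'xx V'xθ fx fu fθ Hux Huu Huθ dX dU⟩
end
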